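/- Let F be a field, V an infinite-dimensional F-vector space, V* its dual, V̄ = V ⊕ V*, and q the quadratic form on V̄ given by q(a,α) = α(a). Let N be a totally q-singular subspace of V̄ which has codimension 1 in some maximal totally q-singular subspace of V̄. Then N is contained in at most two maximal totally q-singular subspaces of V̄. (Hence every non-deep sub-generator of the quadric S_q is hyperbolic, so S_q is a hyperbolic, and therefore regular, polar space.) -/
import Mathlib


/-- The quadratic form `q(a,α) = α(a)` on `V̄ = V ⊕ V*`. -/
def quadForm {F V : Type*} [Field F] [AddCommGroup V] [Module F V]
    (p : V × Module.Dual F V) : F :=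
  p.2 p.1

/-- A totally `q`-singular subspace of `V̄`. -/
def QTotSing {F V : Type*} [Field F] [AddCommGroup V] [Module F V]
    (W : Submodule F (V × Module.Dual F V)) : Prop :=
  ∀ w ∈ W, quadForm w = 0

/-- A generator of the quadric `S_q`: a maximal totally `q`-singular subspace. -/
def QGen {F V : Type*} [Field F] [AddCommGroup V] [Module F V]
    (W : Submodule F (V × Module.Dual F V)) : Prop :=
  QTotSing W ∧
    ∀ W' : Submodule F (V × Module.Dual F V), QTotSing W' → W ≤ W' → W' = W

section Aux

variable {F V : Type*} [Field F] [AddCommGroup V] [Module F V]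

/-- The bilinear form associated to `quadForm`. -/
def Bf (w w' : V × Module.Dual F V) : F := w'.2 w.1 + w.2 w'.1

lemma Bf_comm (x y : V × Module.Dual F V) : Bf x y = Bf y x := by
  simp [Bf, add_comm]

lemma Bf_add_left (x y z : V × Module.Dual F V) : Bf (x + y) z = Bf x z + Bf y z := by
  simp [Bf]; ring

lemma Bf_sub_left (x y z : V × Module.Dual F V) : Bf (x - y) z = Bf x z - Bf y z := by
  simp [Bf]; ring

lemma Bf_smul_left (t : F) (x z : V × Module.Dual F V) : Bf (t • x) z = t * Bf x z := by
  simp [Bf, smul_eq_mul]; ring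

lemma Bf_add_right (x y z : V × Module.Dual F V) : Bf x (y + z) = Bf x y + Bf x z := by
  simp [Bf]; ring

lemma Bf_sub_right (x y z : V × Module.Dual F V) : Bf x (y - z) = Bf x y - Bf x z := by
  simp [Bf]; ring

lemma Bf_smul_right (t : F) (x z : V × Module.Dual F V) : Bf x (t • z) = t * Bf x z := by
  simp [Bf, smul_eq_mul]; ring

lemma quad_add (x y : V × Module.Dual F V) :
    quadForm (x + y) = quadForm x + quadForm y + Bf x y := by
  simp [quadForm, Bf]; ring

lemma quad_sub (x y : V × Module.Dual F V) :
    quadForm (x - y) = quadForm x + quadForm y - Bf x y := by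
  simp [quadForm, Bf]; ring

lemma quad_smul (t : F) (x : V × Module.Dual F V) :
    quadForm (t • x) = t * t * quadForm x := by
  simp [quadForm, smul_eq_mul]; ring

lemma qtsBf {W : Submodule F (V × Module.Dual F V)} (hW : QTotSing W)
    {x y : V × Module.Dual F V} (hx : x ∈ W) (hy : y ∈ W) : Bf x y = 0 := by
  have h3 := hW (x + y) (add_mem hx hy)
  rw [quad_add, hW x hx, hW y hy] at h3
  simpa using h3

/-- For a generator `M`, any functional annihilating the `V`-projection of `M`
gives an element `(0, α)` of `M`. -/
lemma gen_ann {M : Submodule F (V × Module.Dual F V)} (hM : QGen M)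
    {α : Module.Dual F V} (hα : ∀ x ∈ M, α x.1 = 0) : ((0 : V), α) ∈ M := by
  have hsing : QTotSing (M ⊔ Submodule.span F {((0 : V), α)}) := by
    intro w hw
    obtain ⟨x, hx, s', hs', rfl⟩ := Submodule.mem_sup.mp hw
    obtain ⟨t, rfl⟩ := Submodule.mem_span_singleton.mp hs'
    have h1 : quadForm ((0 : V), α) = 0 := by simp [quadForm]
    have h2 : Bf x ((0 : V), α) = 0 := by simp [Bf, hα x hx]
    rw [quad_add, quad_smul, hM.1 x hx, Bf_smul_right, h1, h2]; ring
  have hEq := hM.2 _ hsing le_sup_left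
  rw [← hEq]
  exact Submodule.mem_sup_right (Submodule.mem_span_singleton_self _)

/-- A generator contains its own perp: `M^⊥ ⊆ M`. -/
lemma gen_perp {M : Submodule F (V × Module.Dual F V)} (hM : QGen M)
    {u : V × Module.Dual F V} (hu : ∀ x ∈ M, Bf u x = 0) : u ∈ M := by
  have hu1 : u.1 ∈ M.map (LinearMap.fst F V (Module.Dual F V)) := by
    rw [← Subspace.forall_mem_dualAnnihilator_apply_eq_zero_iff
      (M.map (LinearMap.fst F V (Module.Dual F V))) u.1]
    intro φ hφ
    rw [Submodule.mem_dualAnnihilator] at hφ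
    have hφM : ((0 : V), φ) ∈ M :=
      gen_ann hM (fun x hx => hφ x.1 ⟨x, hx, rfl⟩)
    have h := hu _ hφM
    simpa [Bf] using h
  obtain ⟨x, hxM, hx1⟩ := Submodule.mem_map.mp hu1
  simp only [LinearMap.fst_apply] at hx1
  have hψ : ∀ w ∈ M, (u.2 - x.2) w.1 = 0 := by
    intro w hw
    have h1 := hu w hw
    have h2 := qtsBf hM.1 hxM hw
    simp only [Bf] at h1 h2
    rw [← hx1] at h1
    rw [LinearMap.sub_apply]
    linear_combination h1 - h2
  have hψM : ((0 : V), u.2 - x.2) ∈ M := gen_ann hM hψ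
  have huEq : u = x + ((0 : V), u.2 - x.2) := by
    rw [Prod.ext_iff]
    constructor
    · simp [hx1]
    · simp
  rw [huEq]
  exact Submodule.add_mem _ hxM hψM

end Aux

/-- Every non-deep sub-generator of the quadric `S_q` is hyperbolic: a totally
`q`-singular subspace `N` of codimension 1 in some generator is contained in at
most two generators. -/
theorem stmt_14 {F V : Type*} [Field F] [AddCommGroup V] [Module F V]
    (hV : ¬ Module.Finite F V)
    (N : Submodule F (V × Module.Dual F V)) (hN : QTotSing N)
    (M : Submodule F (V × Module.Dual F V)) (hM : QGen M)
    (hNM : N < M)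
    (hcodim : ∀ W : Submodule F (V × Module.Dual F V),
      N ≤ W → W ≤ M → W = N ∨ W = M) :
    ∀ M₁ M₂ M₃ : Submodule F (V × Module.Dual F V),
      QGen M₁ → QGen M₂ → QGen M₃ → N ≤ M₁ → N ≤ M₂ → N ≤ M₃ →
      M₁ = M₂ ∨ M₁ = M₃ ∨ M₂ = M₃ := by
  intro M₁ M₂ M₃ h1 h2 h3 hN1 hN2 hN3
  by_contra hcon
  push_neg at hcon
  obtain ⟨h12, h13, h23⟩ := hcon
  obtain ⟨m, hmM, hmN⟩ := SetLike.exists_of_lt hNM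
  -- `M = N + F·m`
  have hMeq : N ⊔ Submodule.span F {m} = M := by
    rcases hcodim (N ⊔ Submodule.span F {m}) le_sup_left
        (sup_le hNM.le ((Submodule.span_singleton_le_iff_mem m M).mpr hmM)) with h | h
    · exact absurd (h ▸ Submodule.mem_sup_right (Submodule.mem_span_singleton_self m)) hmN
    · exact h
  -- every generator `P ⊇ N` distinct from `M` has the form `N + F·y`
  have key : ∀ P : Submodule F (V × Module.Dual F V), QGen P → N ≤ P → P ≠ M →
      ∃ y, y ∈ P ∧ y ∉ M ∧ Bf m y ≠ 0 ∧ P = N ⊔ Submodule.span F {y} := by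
    intro P hP hNP hPM
    have hy : ∃ y ∈ P, y ∉ M := by
      by_contra h
      push_neg at h
      exact hPM (hP.2 M hM.1 h).symm
    obtain ⟨y, hyP, hyM⟩ := hy
    have hc0 : Bf m y ≠ 0 := by
      intro h0
      apply hyM
      apply gen_perp hM
      intro w hw
      rw [← hMeq] at hw
      obtain ⟨n, hn, s', hs', rfl⟩ := Submodule.mem_sup.mp hw
      obtain ⟨s, rfl⟩ := Submodule.mem_span_singleton.mp hs'
      rw [Bf_add_right, Bf_smul_right, qtsBf hP.1 hyP (hNP hn), Bf_comm y m, h0]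
      ring
    have hMP : M ⊓ P = N := by
      rcases hcodim (M ⊓ P) (le_inf hNM.le hNP) inf_le_left with h | h
      · exact h
      · exact absurd (hM.2 P hP.1 ((le_of_eq h.symm).trans inf_le_right)) hPM
    refine ⟨y, hyP, hyM, hc0, le_antisymm ?_
      (sup_le hNP ((Submodule.span_singleton_le_iff_mem y P).mpr hyP))⟩
    intro x hxP
    have hx'M : x - (Bf m x / Bf m y) • y ∈ M := by
      apply gen_perp hM
      intro w hw
      rw [← hMeq] at hw
      obtain ⟨n, hn, s', hs', rfl⟩ := Submodule.mem_sup.mp hw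
      obtain ⟨s, rfl⟩ := Submodule.mem_span_singleton.mp hs'
      simp only [Bf_add_right, Bf_smul_right, Bf_sub_left, Bf_smul_left]
      rw [qtsBf hP.1 hxP (hNP hn), qtsBf hP.1 hyP (hNP hn), Bf_comm x m, Bf_comm y m,
        div_mul_cancel₀ _ hc0]
      ring
    have hx'N : x - (Bf m x / Bf m y) • y ∈ N := by
      rw [← hMP]
      exact Submodule.mem_inf.mpr ⟨hx'M, sub_mem hxP (Submodule.smul_mem _ _ hyP)⟩
    have hyy : (Bf m x / Bf m y) • y ∈ N ⊔ Submodule.span F {y} :=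
      Submodule.mem_sup_right
        (Submodule.smul_mem _ _ (Submodule.mem_span_singleton_self y))
    have hsum := Submodule.add_mem _ (Submodule.mem_sup_left hx'N) hyy
    simpa using hsum
  -- two generators over `N`, both different from `M`, coincide
  have main : ∀ P Q : Submodule F (V × Module.Dual F V), QGen P → QGen Q →
      N ≤ P → N ≤ Q → P ≠ M → Q ≠ M → P = Q := by
    intro P Q hP hQ hNP hNQ hPM hQM
    obtain ⟨y, hyP, hyM, hcy, hPeq⟩ := key P hP hNP hPM
    obtain ⟨z, hzQ, hzM, hcz, hQeq⟩ := key Q hQ hNQ hQM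
    have huM : (Bf m z) • y - (Bf m y) • z ∈ M := by
      apply gen_perp hM
      intro w hw
      rw [← hMeq] at hw
      obtain ⟨n, hn, s', hs', rfl⟩ := Submodule.mem_sup.mp hw
      obtain ⟨s, rfl⟩ := Submodule.mem_span_singleton.mp hs'
      simp only [Bf_add_right, Bf_smul_right, Bf_sub_left, Bf_smul_left]
      rw [qtsBf hP.1 hyP (hNP hn), qtsBf hQ.1 hzQ (hNQ hn), Bf_comm y m, Bf_comm z m]
      ring
    have hq0 : quadForm ((Bf m z) • y - (Bf m y) • z) = 0 := hM.1 _ huM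
    rw [quad_sub, quad_smul, quad_smul, Bf_smul_left, Bf_smul_right,
      hP.1 y hyP, hQ.1 z hzQ] at hq0
    have hyz : Bf y z = 0 := by
      have h' : Bf m z * (Bf m y * Bf y z) = 0 := by linear_combination -hq0
      rcases mul_eq_zero.mp h' with h | h
      · exact absurd h hcz
      rcases mul_eq_zero.mp h with h | h
      · exact absurd h hcy
      · exact h
    have hsing : QTotSing (P ⊔ Submodule.span F {z}) := by
      intro w hw
      obtain ⟨p, hp, s', hs', rfl⟩ := Submodule.mem_sup.mp hw
      obtain ⟨s, rfl⟩ := Submodule.mem_span_singleton.mp hs'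
      have hpz : Bf p z = 0 := by
        rw [hPeq] at hp
        obtain ⟨n, hn, r', hr', rfl⟩ := Submodule.mem_sup.mp hp
        obtain ⟨r, rfl⟩ := Submodule.mem_span_singleton.mp hr'
        rw [Bf_add_left, Bf_smul_left, hyz, qtsBf hQ.1 (hNQ hn) hzQ]
        ring
      rw [quad_add, quad_smul, hP.1 p hp, hQ.1 z hzQ, Bf_smul_right, hpz]
      ring
    have hzP : z ∈ P := by
      have hEq := hP.2 _ hsing le_sup_left
      rw [← hEq]
      exact Submodule.mem_sup_right (Submodule.mem_span_singleton_self z)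
    have hQP : Q ≤ P := by
      rw [hQeq]
      exact sup_le hNP ((Submodule.span_singleton_le_iff_mem z P).mpr hzP)
    exact hQ.2 P hP.1 hQP
  -- assemble: at most one of the three can equal `M`
  by_cases e1 : M₁ = M
  · by_cases e2 : M₂ = M
    · exact h12 (e1.trans e2.symm)
    · by_cases e3 : M₃ = M
      · exact h13 (e1.trans e3.symm)
      · exact h23 (main M₂ M₃ h2 h3 hN2 hN3 e2 e3)
  · by_cases e2 : M₂ = M
    · by_cases e3 : M₃ = M
      · exact h23 (e2.trans e3.symm)
      · exact h13 (main M₁ M₃ h1 h3 hN1 hN3 e1 e3)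
    · exact h12 (main M₁ M₂ h1 h2 hN1 hN2 e1 e2)
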